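/- arXiv:math/0404294 — 2 statements merged into one kernel-verified Lean document; each statement's English description precedes it below -/
import Mathlib

section
/- Let T = {diag(e^t, e^{-t}) : t ∈ ℝ} ⊂ GL(2,ℝ), acting on even smooth functions on S¹ via the principal series action π_μ of parameter μ (realized on homogeneous functions of degree μ-1 on ℝ² \ {0}). Then the distribution v ↦ ∫_{S¹} v(x) |sin(2x)|^{(-1-μ)/2} dx on V_μ is T-invariant: for every g_t = diag(e^t, e^{-t}) and every smooth even v, ∫ (π_μ(g_t)v)(x)|sin 2x|^{(-1-μ)/2} dx = ∫ v(x)|sin 2x|^{(-1-μ)/2} dx. -/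
/-!
The integrand `F v = f v * |2 v₀ v₁| ^ ((-1 - μ) / 2)` is homogeneous of degree `-2` on `ℝ²`, so
its integral over the circle transforms like a density under linear maps. For `g = diag(a, b)`
with `a, b > 0` write `(a cos x, b sin x) = √ρ(x) • (cos φ(x), sin φ(x))` with
`ρ = a² cos² x + b² sin² x`; then `φ' = a b / ρ`, so the substitution `y = φ(x)` gives
`∫ F (g θ) dθ = (a b)⁻¹ ∫ F θ dθ`, and `a b = 1` for `a = e^{-t}`, `b = e^t`.
-/

open Real MeasureTheory

theorem Real.sqrt_one_add_div_sq {p : ℝ} (hp : 0 < p) (q : ℝ) :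
    √(1 + (q / p) ^ 2) = √(p ^ 2 + q ^ 2) / p := by
  rw [← sqrt_sq hp.le, ← sqrt_div' _ (sq_nonneg p), sqrt_sq hp.le]
  congr 1
  field_simp

theorem Real.cos_add_arctan_div {p : ℝ} (hp : 0 < p) (q x : ℝ) :
    cos (x + arctan (q / p)) = (p * cos x - q * sin x) / √(p ^ 2 + q ^ 2) := by
  rw [cos_add, cos_arctan, sin_arctan, sqrt_one_add_div_sq hp]
  field_simp

theorem Real.sin_add_arctan_div {p : ℝ} (hp : 0 < p) (q x : ℝ) :
    sin (x + arctan (q / p)) = (p * sin x + q * cos x) / √(p ^ 2 + q ^ 2) := by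
  rw [sin_add, cos_arctan, sin_arctan, sqrt_one_add_div_sq hp]
  field_simp

/-- A continuous polar angle of the point `(a cos x, b sin x)`: for `a, b > 0` the number
`e^{-ix} (a cos x + i b sin x) = (a cos² x + b sin² x) + i (b - a) sin x cos x`
has positive real part, so its argument is an arctangent. -/
noncomputable def ellipseAngle (a b x : ℝ) : ℝ :=
  x + arctan ((b - a) * sin x * cos x / (a * cos x ^ 2 + b * sin x ^ 2))

noncomputable def ellipseNormSq (a b x : ℝ) : ℝ := a ^ 2 * cos x ^ 2 + b ^ 2 * sin x ^ 2

theorem ellipseNormSq_eq (a b x : ℝ) :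
    ellipseNormSq a b x = (a * cos x ^ 2 + b * sin x ^ 2) ^ 2 + ((b - a) * sin x * cos x) ^ 2 := by
  unfold ellipseNormSq
  linear_combination -(a ^ 2 * cos x ^ 2 + b ^ 2 * sin x ^ 2) * sin_sq_add_cos_sq x

theorem mul_cos_sq_add_mul_sin_sq_pos {a b : ℝ} (ha : 0 < a) (hb : 0 < b) (x : ℝ) :
    0 < a * cos x ^ 2 + b * sin x ^ 2 := by
  nlinarith [sin_sq_add_cos_sq x, mul_pos ha hb, mul_nonneg (sq_nonneg a) (sq_nonneg (cos x)),
    mul_nonneg (sq_nonneg b) (sq_nonneg (sin x))]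

theorem ellipseNormSq_pos {a b : ℝ} (ha : 0 < a) (hb : 0 < b) (x : ℝ) :
    0 < ellipseNormSq a b x := by
  simpa [ellipseNormSq] using mul_cos_sq_add_mul_sin_sq_pos (pow_pos ha 2) (pow_pos hb 2) x

theorem cos_ellipseAngle {a b : ℝ} (ha : 0 < a) (hb : 0 < b) (x : ℝ) :
    cos (ellipseAngle a b x) = a * cos x / √(ellipseNormSq a b x) := by
  rw [ellipseAngle, cos_add_arctan_div (mul_cos_sq_add_mul_sin_sq_pos ha hb x), ← ellipseNormSq_eq]
  congr 1
  linear_combination a * cos x * sin_sq_add_cos_sq x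

theorem sin_ellipseAngle {a b : ℝ} (ha : 0 < a) (hb : 0 < b) (x : ℝ) :
    sin (ellipseAngle a b x) = b * sin x / √(ellipseNormSq a b x) := by
  rw [ellipseAngle, sin_add_arctan_div (mul_cos_sq_add_mul_sin_sq_pos ha hb x), ← ellipseNormSq_eq]
  congr 1
  linear_combination b * sin x * sin_sq_add_cos_sq x

theorem hasDerivAt_ellipseAngle {a b : ℝ} (ha : 0 < a) (hb : 0 < b) (x : ℝ) :
    HasDerivAt (ellipseAngle a b) (a * b / ellipseNormSq a b x) x := by
  have hp : HasDerivAt (fun y => a * cos y ^ 2 + b * sin y ^ 2)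
      (2 * ((b - a) * sin x * cos x)) x :=
    ((((hasDerivAt_cos x).fun_pow 2).const_mul a).fun_add
      (((hasDerivAt_sin x).fun_pow 2).const_mul b)).congr_deriv (by ring)
  have hq : HasDerivAt (fun y => (b - a) * sin y * cos y) ((b - a) * (cos x ^ 2 - sin x ^ 2)) x :=
    (((hasDerivAt_sin x).const_mul (b - a)).fun_mul (hasDerivAt_cos x)).congr_deriv (by ring)
  refine ((hasDerivAt_id x).fun_add
    ((hq.fun_div hp (mul_cos_sq_add_mul_sin_sq_pos ha hb x).ne').arctan)).congr_deriv ?_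
  have hρ := ellipseNormSq_pos ha hb x
  have hp := mul_cos_sq_add_mul_sin_sq_pos ha hb x
  rw [ellipseNormSq_eq] at *
  field_simp
  linear_combination a * b * (1 + sin x ^ 2 + cos x ^ 2) * sin_sq_add_cos_sq x

theorem continuous_ellipseAngle {a b : ℝ} (ha : 0 < a) (hb : 0 < b) :
    Continuous (ellipseAngle a b) :=
  continuous_iff_continuousAt.2 fun x => (hasDerivAt_ellipseAngle ha hb x).continuousAt

@[simp]
theorem ellipseAngle_zero (a b : ℝ) : ellipseAngle a b 0 = 0 := by
  simp [ellipseAngle]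

@[simp]
theorem ellipseAngle_two_pi (a b : ℝ) : ellipseAngle a b (2 * π) = 2 * π := by
  simp [ellipseAngle]

theorem ellipse_point_eq_smul {a b : ℝ} (ha : 0 < a) (hb : 0 < b) (x : ℝ) :
    ![a * cos x, b * sin x] =
      √(ellipseNormSq a b x) • ![cos (ellipseAngle a b x), sin (ellipseAngle a b x)] := by
  have hr : √(ellipseNormSq a b x) ≠ 0 := (sqrt_pos.2 (ellipseNormSq_pos ha hb x)).ne'
  rw [cos_ellipseAngle ha hb, sin_ellipseAngle ha hb]
  ext i
  fin_cases i <;> simp [mul_div_cancel₀ _ hr]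

theorem integral_diag_circle_of_homogeneous {E : Type*} [NormedAddCommGroup E]
    [NormedSpace ℝ E] {F : (Fin 2 → ℝ) → E}
    (hF : ∀ c : ℝ, 0 < c → ∀ v, F (c • v) = (c ^ 2)⁻¹ • F v) {a b : ℝ} (ha : 0 < a) (hb : 0 < b) :
    ∫ x in (0 : ℝ)..2 * π, F ![a * cos x, b * sin x] =
      (a * b)⁻¹ • ∫ x in (0 : ℝ)..2 * π, F ![cos x, sin x] := by
  have hpt : ∀ x, F ![a * cos x, b * sin x] = (a * b)⁻¹ • ((a * b / ellipseNormSq a b x) •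
      F ![cos (ellipseAngle a b x), sin (ellipseAngle a b x)]) := by
    intro x
    have hρ := ellipseNormSq_pos ha hb x
    rw [ellipse_point_eq_smul ha hb, hF _ (sqrt_pos.2 hρ), sq_sqrt hρ.le, smul_smul]
    congr 1
    field_simp
  simp_rw [hpt, intervalIntegral.integral_smul]
  congr 1
  simpa using intervalIntegral.integral_deriv_smul_comp_of_deriv_nonneg
    (a := 0) (b := 2 * π) (g := fun y => F ![cos y, sin y])
    (continuous_ellipseAngle ha hb).continuousOn (fun x _ => hasDerivAt_ellipseAngle ha hb x)
    (fun x _ => (div_pos (mul_pos ha hb) (ellipseNormSq_pos ha hb x)).le)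

theorem abs_two_mul_smul_apply_mul (c : ℝ) (v : Fin 2 → ℝ) :
    |2 * (c • v) 0 * (c • v) 1| = c ^ 2 * |2 * v 0 * v 1| := by
  rw [Pi.smul_apply, Pi.smul_apply, smul_eq_mul, smul_eq_mul, ← abs_sq c, ← abs_mul]
  ring_nf

theorem mul_cpow_abs_two_mul_homogeneous {f : (Fin 2 → ℝ) → ℂ} {μ : ℂ}
    (hf : ∀ c : ℝ, 0 < c → ∀ v, f (c • v) = (c : ℂ) ^ (μ - 1) * f v) {c : ℝ} (hc : 0 < c)
    (v : Fin 2 → ℝ) :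
    f (c • v) * ((|2 * (c • v) 0 * (c • v) 1| : ℝ) : ℂ) ^ ((-1 - μ) / 2) =
      (c ^ 2)⁻¹ • (f v * ((|2 * v 0 * v 1| : ℝ) : ℂ) ^ ((-1 - μ) / 2)) := by
  have hc0 : (c : ℂ) ≠ 0 := by exact_mod_cast hc.ne'
  have hsq : ((c ^ 2 : ℝ) : ℂ) ^ ((-1 - μ) / 2) = (c : ℂ) ^ (2 * ((-1 - μ) / 2)) := by
    rw [← Real.rpow_natCast, ← Complex.cpow_mul_ofReal_nonneg hc.le]
    norm_num
  have hpow : (c : ℂ) ^ (μ - 1) * (c : ℂ) ^ (2 * ((-1 - μ) / 2)) = ((c ^ 2)⁻¹ : ℝ) := by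
    rw [← Complex.cpow_add _ _ hc0, show μ - 1 + 2 * ((-1 - μ) / 2) = -(2 : ℕ) by
      push_cast; ring, Complex.cpow_neg, Complex.cpow_natCast]
    norm_num
  rw [abs_two_mul_smul_apply_mul, Complex.ofReal_mul,
    Complex.mul_cpow_ofReal_nonneg (sq_nonneg c) (abs_nonneg _), hf c hc, hsq, Complex.real_smul,
    ← hpow]
  ring

theorem T_invariant_functional_general (μ : ℂ)
    (f : (Fin 2 → ℝ) → ℂ)
    (hhom : ∀ a : ℝ, a ≠ 0 → ∀ v : Fin 2 → ℝ,
      f (a • v) = ((|a| : ℝ) : ℂ) ^ (μ - 1) * f v)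
    (t : ℝ) :
    ∫ x in (0:ℝ)..(2 * π),
        f ![Real.exp (-t) * Real.cos x, Real.exp t * Real.sin x] *
          ((|Real.sin (2 * x)| : ℝ) : ℂ) ^ ((-1 - μ) / 2) =
    ∫ x in (0:ℝ)..(2 * π),
        f ![Real.cos x, Real.sin x] *
          ((|Real.sin (2 * x)| : ℝ) : ℂ) ^ ((-1 - μ) / 2) := by
  have hf : ∀ c : ℝ, 0 < c → ∀ v, f (c • v) = (c : ℂ) ^ (μ - 1) * f v := fun c hc v => by
    rw [hhom c hc.ne', abs_of_pos hc]
  have h := integral_diag_circle_of_homogeneous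
    (F := fun v => f v * ((|2 * v 0 * v 1| : ℝ) : ℂ) ^ ((-1 - μ) / 2))
    (fun c hc => mul_cpow_abs_two_mul_homogeneous hf hc) (exp_pos (-t)) (exp_pos t)
  rw [← exp_add, neg_add_cancel, exp_zero, inv_one, one_smul] at h
  convert h using 3 with x x
  · simp only [Matrix.cons_val_zero, Matrix.cons_val_one, sin_two_mul, exp_neg]
    field_simp
  · simp only [Matrix.cons_val_zero, Matrix.cons_val_one, sin_two_mul]
    ring_nf

/-- T-invariance of the distribution v ↦ ∫ v(x)|sin 2x|^{(-1-μ)/2} dx on the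
principal series V_μ, realized on homogeneous functions of degree μ-1 on ℝ²\{0}.
The action of g_t = diag(e^t, e^{-t}) is f ↦ f ∘ g_t⁻¹ (the determinant is 1). -/
theorem T_invariant_functional (μ : ℂ) (hμ : μ.re < 1)
    (f : (Fin 2 → ℝ) → ℂ)
    (hcont : ContinuousOn f {v | v ≠ 0})
    (hhom : ∀ a : ℝ, a ≠ 0 → ∀ v : Fin 2 → ℝ,
      f (a • v) = ((|a| : ℝ) : ℂ) ^ (μ - 1) * f v)
    (t : ℝ) :
    ∫ x in (0:ℝ)..(2 * π),
        f ![Real.exp (-t) * Real.cos x, Real.exp t * Real.sin x] *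
          ((|Real.sin (2 * x)| : ℝ) : ℂ) ^ ((-1 - μ) / 2) =
    ∫ x in (0:ℝ)..(2 * π),
        f ![Real.cos x, Real.sin x] *
          ((|Real.sin (2 * x)| : ℝ) : ℂ) ^ ((-1 - μ) / 2) :=
  T_invariant_functional_general μ f hhom t
end

section
/- Let V be the space of continuous functions on ℝ² \ {0} homogeneous of degree -2, and let L: V → ℂ be the functional L(f) = (1/2π)∫₀^{2π} f(cos θ, sin θ) dθ. Then L is SL(2,ℝ)-invariant: for every continuous f homogeneous of degree -2 and every g ∈ SL(2,ℝ), (1/2π)∫₀^{2π} f(g⁻¹(cos θ, sin θ)) dθ = (1/2π)∫₀^{2π} f(cos θ, sin θ) dθ. -/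
open Real MeasureTheory

section LSL2section
open Matrix Set

noncomputable section
namespace LSL2aux

abbrev SL2 := Matrix.SpecialLinearGroup (Fin 2) ℝ

lemma mulVec_inv_cancel (g : SL2) (v : Fin 2 → ℝ) :
    (g : Matrix (Fin 2) (Fin 2) ℝ).mulVec (((g⁻¹ : SL2) : Matrix (Fin 2) (Fin 2) ℝ).mulVec v) = v := by
  rw [Matrix.mulVec_mulVec, ← Matrix.SpecialLinearGroup.coe_mul, mul_inv_cancel,
    Matrix.SpecialLinearGroup.coe_one, Matrix.one_mulVec]

lemma inv_mulVec_cancel (g : SL2) (v : Fin 2 → ℝ) :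
    ((g⁻¹ : SL2) : Matrix (Fin 2) (Fin 2) ℝ).mulVec ((g : Matrix (Fin 2) (Fin 2) ℝ).mulVec v) = v := by
  rw [Matrix.mulVec_mulVec, ← Matrix.SpecialLinearGroup.coe_mul, inv_mul_cancel,
    Matrix.SpecialLinearGroup.coe_one, Matrix.one_mulVec]

lemma continuous_mulVec (M : Matrix (Fin 2) (Fin 2) ℝ) :
    Continuous fun v : Fin 2 → ℝ => M.mulVec v :=
  LinearMap.continuous_on_pi (Matrix.mulVecLin M)

def mulVecHomeo (g : SL2) : (Fin 2 → ℝ) ≃ₜ (Fin 2 → ℝ) where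
  toFun v := (g : Matrix (Fin 2) (Fin 2) ℝ).mulVec v
  invFun v := ((g⁻¹ : SL2) : Matrix (Fin 2) (Fin 2) ℝ).mulVec v
  left_inv v := inv_mulVec_cancel g v
  right_inv v := mulVec_inv_cancel g v
  continuous_toFun := continuous_mulVec _
  continuous_invFun := continuous_mulVec _

lemma mulVec_ne_zero (g : SL2) {v : Fin 2 → ℝ} (hv : v ≠ 0) :
    (g : Matrix (Fin 2) (Fin 2) ℝ).mulVec v ≠ 0 := by
  intro h
  apply hv
  have := congrArg (fun w => ((g⁻¹ : SL2) : Matrix (Fin 2) (Fin 2) ℝ).mulVec w) h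
  simp only [Matrix.mulVec_zero] at this
  rw [← this, inv_mulVec_cancel g v]

lemma mp_mulVec (g : SL2) :
    MeasurePreserving (fun v : Fin 2 → ℝ => (g : Matrix (Fin 2) (Fin 2) ℝ).mulVec v)
      volume volume := by
  refine ⟨(continuous_mulVec _).measurable, ?_⟩
  have hdet : ((g : Matrix (Fin 2) (Fin 2) ℝ)).det = 1 := g.2
  have := Real.map_matrix_volume_pi_eq_smul_volume_pi (M := (g : Matrix (Fin 2) (Fin 2) ℝ))
    (by rw [hdet]; norm_num)
  simp only [hdet] at this
  have h2 : (Matrix.toLin' (g : Matrix (Fin 2) (Fin 2) ℝ) : (Fin 2 → ℝ) → Fin 2 → ℝ)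
      = fun v => (g : Matrix (Fin 2) (Fin 2) ℝ).mulVec v := by
    funext v; simp [Matrix.toLin'_apply]
  rw [h2] at this
  simpa using this

lemma integral_comp_mulVec (g : SL2) (F : (Fin 2 → ℝ) → ℂ) :
    ∫ v : Fin 2 → ℝ, F ((g : Matrix (Fin 2) (Fin 2) ℝ).mulVec v) = ∫ v, F v :=
  (mp_mulVec g).integral_comp (mulVecHomeo g).measurableEmbedding F

lemma isCompact_K0 (N : SL2) : IsCompact {w : Fin 2 → ℝ | 1 ≤ ‖(N : Matrix (Fin 2) (Fin 2) ℝ).mulVec w‖ ∧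
      ‖(N : Matrix (Fin 2) (Fin 2) ℝ).mulVec w‖ ≤ Real.exp 1} := by
  have hA : IsCompact {x : Fin 2 → ℝ | 1 ≤ ‖x‖ ∧ ‖x‖ ≤ Real.exp 1} := by
    refine (isCompact_closedBall (0 : Fin 2 → ℝ) (Real.exp 1)).of_isClosed_subset ?_ ?_
    · exact (isClosed_le continuous_const continuous_norm).inter
        (isClosed_le continuous_norm continuous_const)
    · intro x hx
      simpa [Metric.mem_closedBall, dist_zero_right] using hx.2
  have : {w : Fin 2 → ℝ | 1 ≤ ‖(N : Matrix (Fin 2) (Fin 2) ℝ).mulVec w‖ ∧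
      ‖(N : Matrix (Fin 2) (Fin 2) ℝ).mulVec w‖ ≤ Real.exp 1}
      = (mulVecHomeo N) ⁻¹' {x : Fin 2 → ℝ | 1 ≤ ‖x‖ ∧ ‖x‖ ≤ Real.exp 1} := rfl
  rw [this]
  exact (mulVecHomeo N).isCompact_preimage.mpr hA

lemma polar_eval (f : (Fin 2 → ℝ) → ℂ) (hcont : ContinuousOn f {v | v ≠ 0})
    (hhom : ∀ a : ℝ, 0 < a → ∀ v : Fin 2 → ℝ,
      f (a • v) = (((a : ℂ)) ^ (2 : ℕ))⁻¹ * f v)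
    (M N : SL2) :
    (∫ v : Fin 2 → ℝ, Set.indicator
        {w : Fin 2 → ℝ | 1 ≤ ‖(N : Matrix (Fin 2) (Fin 2) ℝ).mulVec w‖ ∧
          ‖(N : Matrix (Fin 2) (Fin 2) ℝ).mulVec w‖ ≤ Real.exp 1}
        (fun w => f ((M : Matrix (Fin 2) (Fin 2) ℝ).mulVec w)) v)
    = ∫ θ in (-π)..π, f ((M : Matrix (Fin 2) (Fin 2) ℝ).mulVec ![Real.cos θ, Real.sin θ]) := by
  set Mm := (M : Matrix (Fin 2) (Fin 2) ℝ) with hMm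
  set Nm := (N : Matrix (Fin 2) (Fin 2) ℝ) with hNm
  set u : ℝ → Fin 2 → ℝ := fun θ => ![Real.cos θ, Real.sin θ] with hu
  have hucont : Continuous u := by
    apply continuous_pi
    intro i
    fin_cases i
    · simpa [u] using Real.continuous_cos
    · simpa [u] using Real.continuous_sin
  have hune : ∀ θ, u θ ≠ 0 := by
    intro θ h
    have h0 := congrFun h 0
    have h1 := congrFun h 1
    simp [u] at h0 h1
    nlinarith [Real.sin_sq_add_cos_sq θ]
  set S1 : Set (Fin 2 → ℝ) :=
    {w | 1 ≤ ‖Nm.mulVec w‖ ∧ ‖Nm.mulVec w‖ ≤ Real.exp 1} with hS1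
  have hS1comp : IsCompact S1 := isCompact_K0 N
  have hS1ne : ∀ w ∈ S1, w ≠ 0 := by
    rintro w ⟨h1, _⟩ rfl
    simp [Matrix.mulVec_zero] at h1
    linarith
  set G : (Fin 2 → ℝ) → ℂ := Set.indicator S1 (fun w => f (Mm.mulVec w)) with hG
  -- bounds
  set K : Set (Fin 2 → ℝ) := (fun w => Mm.mulVec w) '' S1 with hK
  have hKcomp : IsCompact K := hS1comp.image (continuous_mulVec Mm)
  have hKne : ∀ x ∈ K, x ≠ 0 := by
    rintro x ⟨w, hw, rfl⟩
    exact mulVec_ne_zero M (hS1ne w hw)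
  obtain ⟨C, hC⟩ := hKcomp.exists_bound_of_continuousOn (hcont.mono hKne)
  obtain ⟨R, hR⟩ := hS1comp.isBounded.subset_closedBall (0 : Fin 2 → ℝ)
  set C' : ℝ := max C 0 with hC'
  set R' : ℝ := 2 * max R 0 with hR'
  have habs : ∀ p : ℝ × ℝ, p.1 • u p.2 ∈ S1 → |p.1| ≤ R' := by
    intro p hp
    have hw := hR hp
    rw [Metric.mem_closedBall, dist_zero_right] at hw
    have hwR : ‖p.1 • u p.2‖ ≤ max R 0 := le_trans hw (le_max_left _ _)
    have h0 : |p.1| * |Real.cos p.2| ≤ max R 0 := by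
      have h' := norm_le_pi_norm (p.1 • u p.2) 0
      simp [u, Real.norm_eq_abs, abs_mul] at h'
      exact h'.trans hwR
    have h1 : |p.1| * |Real.sin p.2| ≤ max R 0 := by
      have h' := norm_le_pi_norm (p.1 • u p.2) 1
      simp [u, Real.norm_eq_abs, abs_mul] at h'
      exact h'.trans hwR
    have hpyth := Real.sin_sq_add_cos_sq p.2
    have hc1 : |Real.cos p.2| ≤ 1 := Real.abs_cos_le_one p.2
    have hs1 : |Real.sin p.2| ≤ 1 := Real.abs_sin_le_one p.2
    have hcs : |Real.cos p.2| ^ 2 + |Real.sin p.2| ^ 2 = 1 := by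
      rw [sq_abs, sq_abs]; linarith
    nlinarith [abs_nonneg p.1, abs_nonneg (Real.cos p.2), abs_nonneg (Real.sin p.2),
      mul_nonneg (abs_nonneg p.1) (abs_nonneg (Real.cos p.2)),
      mul_nonneg (abs_nonneg p.1) (abs_nonneg (Real.sin p.2))]
  -- the set S and function h on ℝ × ℝ
  set S : Set (ℝ × ℝ) := {p | p.1 • u p.2 ∈ S1} with hS
  set h : ℝ × ℝ → ℂ := fun p => p.1 • f (Mm.mulVec (p.1 • u p.2)) with hh
  have hphi : Continuous fun p : ℝ × ℝ => p.1 • u p.2 :=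
    continuous_fst.smul (hucont.comp continuous_snd)
  have hSclosed : IsClosed S := IsClosed.preimage hphi hS1comp.isClosed
  have hSmeas : MeasurableSet S := hSclosed.measurableSet
  have hcontOn : ContinuousOn h S := by
    apply ContinuousOn.smul continuous_fst.continuousOn
    apply hcont.comp ((continuous_mulVec Mm).comp hphi).continuousOn
    intro p hp
    exact mulVec_ne_zero M (hS1ne _ hp)
  have hHind : (fun p : ℝ × ℝ => p.1 • G (p.1 • u p.2)) = Set.indicator S h := by
    funext p
    by_cases hp : p ∈ S
    · have hp1 : p.1 • u p.2 ∈ S1 := hp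
      rw [Set.indicator_of_mem hp, hG, Set.indicator_of_mem hp1]
    · have hp1 : p.1 • u p.2 ∉ S1 := hp
      rw [Set.indicator_of_notMem hp, hG, Set.indicator_of_notMem hp1, smul_zero]
  -- boundedness of h on S
  have hbound : ∀ p ∈ S, ‖h p‖ ≤ R' * C' := by
    intro p hp
    have h1 : |p.1| ≤ R' := habs p hp
    have h2 : ‖f (Mm.mulVec (p.1 • u p.2))‖ ≤ C' :=
      le_trans (hC _ ⟨_, hp, rfl⟩) (le_max_left _ _)
    calc ‖h p‖ = |p.1| * ‖f (Mm.mulVec (p.1 • u p.2))‖ := by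
          rw [hh]; simp [norm_smul, Real.norm_eq_abs]
      _ ≤ R' * C' := by
          apply mul_le_mul h1 h2 (norm_nonneg _)
          rw [hR']; positivity
  -- integrability
  have hint : Integrable (fun p : ℝ × ℝ => p.1 • G (p.1 • u p.2))
      ((volume.restrict (Ioi (0:ℝ))).prod (volume.restrict (Ioo (-π) π))) := by
    rw [hHind, Measure.prod_restrict, ← Measure.volume_eq_prod]
    rw [integrable_indicator_iff hSmeas, IntegrableOn, Measure.restrict_restrict hSmeas]
    have hmeasST : MeasurableSet (S ∩ Ioi (0:ℝ) ×ˢ Ioo (-π) π) :=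
      hSmeas.inter (measurableSet_Ioi.prod measurableSet_Ioo)
    refine ⟨(hcontOn.mono inter_subset_left).aestronglyMeasurable hmeasST, ?_⟩
    apply HasFiniteIntegral.restrict_of_bounded (C := R' * C')
    · -- finite measure
      have hsub : S ∩ Ioi (0:ℝ) ×ˢ Ioo (-π) π ⊆ Icc (-R') R' ×ˢ Icc (-π) π := by
        rintro p ⟨hpS, hpT⟩
        have := habs p hpS
        constructor
        · constructor <;> [linarith [abs_le.mp this |>.1]; linarith [abs_le.mp this |>.2]]
        · exact ⟨hpT.2.1.le, hpT.2.2.le⟩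
      calc volume (S ∩ Ioi (0:ℝ) ×ˢ Ioo (-π) π)
          ≤ volume (Icc (-R') R' ×ˢ Icc (-π) π) := measure_mono hsub
        _ < ⊤ := (isCompact_Icc.prod isCompact_Icc).measure_lt_top
    · rw [ae_restrict_iff' hmeasST]
      exact ae_of_all _ fun p hp => hbound p hp.1
  -- main computation
  have hS1' : ∀ p : ℝ × ℝ, (![(polarCoord.symm p).1, (polarCoord.symm p).2] : Fin 2 → ℝ)
      = p.1 • u p.2 := by
    intro p
    rw [polarCoord_symm_apply]
    funext i
    fin_cases i <;> simp [u]
  calc (∫ v : Fin 2 → ℝ, G v)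
      = ∫ p : ℝ × ℝ, G ![p.1, p.2] :=
        ((MeasurePreserving.symm MeasurableEquiv.finTwoArrow
          (volume_preserving_finTwoArrow ℝ)).integral_comp
          (MeasurableEquiv.finTwoArrow.symm.measurableEmbedding) G).symm
    _ = ∫ p in polarCoord.target, p.1 • G ![(polarCoord.symm p).1, (polarCoord.symm p).2] :=
        (integral_comp_polarCoord_symm (fun p : ℝ × ℝ => G ![p.1, p.2])).symm
    _ = ∫ p in Ioi (0:ℝ) ×ˢ Ioo (-π) π, p.1 • G (p.1 • u p.2) := by
        rw [polarCoord_target]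
        simp only [hS1']
    _ = ∫ θ in Ioo (-π) π, ∫ r in Ioi (0:ℝ), r • G (r • u θ) := by
        rw [Measure.volume_eq_prod, ← Measure.prod_restrict]
        exact integral_prod_symm _ hint
    _ = ∫ θ in Ioo (-π) π, f (Mm.mulVec (u θ)) := by
        apply setIntegral_congr_fun measurableSet_Ioo
        intro θ _
        show (∫ r in Ioi (0:ℝ), r • G (r • u θ)) = f (Mm.mulVec (u θ))
        -- inner radial integral
        set a : ℝ := ‖Nm.mulVec (u θ)‖ with ha
        have hapos : 0 < a := by
          rw [ha, norm_pos_iff]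
          exact mulVec_ne_zero N (hune θ)
        set c : ℂ := f (Mm.mulVec (u θ)) with hc
        have key : ∀ r ∈ Ioi (0:ℝ), r • G (r • u θ)
            = Set.indicator (Icc a⁻¹ (Real.exp 1 * a⁻¹)) (fun r : ℝ => (r : ℝ)⁻¹ • c) r := by
          intro r hr
          rw [Set.mem_Ioi] at hr
          have hnorm : ‖Nm.mulVec (r • u θ)‖ = r * a := by
            rw [Matrix.mulVec_smul, norm_smul, Real.norm_eq_abs, abs_of_pos hr, ha]
          have hmem : (r • u θ ∈ S1) ↔ r ∈ Icc a⁻¹ (Real.exp 1 * a⁻¹) := by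
            rw [hS1, Set.mem_setOf_eq, hnorm, Set.mem_Icc]
            constructor
            · rintro ⟨h1, h2⟩
              constructor
              · nlinarith [mul_inv_cancel₀ (ne_of_gt hapos), inv_pos.mpr hapos]
              · nlinarith [mul_inv_cancel₀ (ne_of_gt hapos), inv_pos.mpr hapos]
            · rintro ⟨h1, h2⟩
              constructor
              · nlinarith [mul_inv_cancel₀ (ne_of_gt hapos), inv_pos.mpr hapos]
              · nlinarith [mul_inv_cancel₀ (ne_of_gt hapos), inv_pos.mpr hapos]
          by_cases hmem' : r • u θ ∈ S1
          · rw [hG, Set.indicator_of_mem hmem', Set.indicator_of_mem (hmem.mp hmem')]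
            rw [Matrix.mulVec_smul]
            rw [hhom r hr]
            have hrne : (r : ℂ) ≠ 0 := by
              exact_mod_cast ne_of_gt hr
            rw [← hc]
            rw [Complex.real_smul, Complex.real_smul]
            push_cast
            field_simp
          · rw [hG, Set.indicator_of_notMem hmem', smul_zero,
              Set.indicator_of_notMem (fun hmem'' => hmem' (hmem.mpr hmem''))]
        rw [setIntegral_congr_fun measurableSet_Ioi key]
        have hsub : Icc a⁻¹ (Real.exp 1 * a⁻¹) ⊆ Ioi (0:ℝ) := by
          intro r hr
          have h' : (0:ℝ) < a⁻¹ := inv_pos.mpr hapos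
          exact lt_of_lt_of_le h' hr.1
        rw [integral_indicator measurableSet_Icc]
        rw [Measure.restrict_restrict measurableSet_Icc, inter_eq_self_of_subset_left hsub]
        rw [integral_smul_const]
        have hle : a⁻¹ ≤ Real.exp 1 * a⁻¹ := by
          nlinarith [Real.exp_one_gt_d9, inv_pos.mpr hapos]
        rw [integral_Icc_eq_integral_Ioc, ← intervalIntegral.integral_of_le hle]
        rw [integral_inv (by
          apply Set.notMem_uIcc_of_lt
          · exact inv_pos.mpr hapos
          · nlinarith [Real.exp_one_gt_d9, inv_pos.mpr hapos])]
        rw [mul_div_assoc, div_self (ne_of_gt (inv_pos.mpr hapos)), mul_one, Real.log_exp,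
          one_smul]
    _ = ∫ θ in (-π)..π, f (Mm.mulVec (u θ)) := by
        rw [intervalIntegral.integral_of_le (by linarith [Real.pi_pos]),
          integral_Ioc_eq_integral_Ioo]

end LSL2aux
end


open LSL2aux

/-- The functional L(f) = (1/2π)∫₀^{2π} f(cos θ, sin θ) dθ on continuous
functions homogeneous of degree -2 on ℝ² \ {0} is SL(2,ℝ)-invariant. -/
theorem L_SL2_invariant (f : (Fin 2 → ℝ) → ℂ)
    (hcont : ContinuousOn f {v | v ≠ 0})
    (hhom : ∀ a : ℝ, 0 < a → ∀ v : Fin 2 → ℝ,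
      f (a • v) = (((a : ℂ)) ^ (2 : ℕ))⁻¹ * f v)
    (g : Matrix.SpecialLinearGroup (Fin 2) ℝ) :
    (1 / (2 * (π : ℂ))) * ∫ x in (0:ℝ)..(2 * π),
        f ((↑(g⁻¹) : Matrix (Fin 2) (Fin 2) ℝ).mulVec ![Real.cos x, Real.sin x]) =
    (1 / (2 * (π : ℂ))) * ∫ x in (0:ℝ)..(2 * π),
        f ![Real.cos x, Real.sin x] := by
  have A1 := polar_eval f hcont hhom (g⁻¹) 1
  have A2 := polar_eval f hcont hhom 1 g
  simp only [Matrix.SpecialLinearGroup.coe_one, Matrix.one_mulVec] at A1 A2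
  set F : (Fin 2 → ℝ) → ℂ := Set.indicator
    {w : Fin 2 → ℝ | 1 ≤ ‖(g : Matrix (Fin 2) (Fin 2) ℝ).mulVec w‖ ∧
      ‖(g : Matrix (Fin 2) (Fin 2) ℝ).mulVec w‖ ≤ Real.exp 1} (fun w => f w) with hF
  have key : (∫ θ in (-π)..π,
        f ((↑(g⁻¹) : Matrix (Fin 2) (Fin 2) ℝ).mulVec ![Real.cos θ, Real.sin θ]))
      = ∫ θ in (-π)..π, f ![Real.cos θ, Real.sin θ] := by
    calc (∫ θ in (-π)..π,
          f ((↑(g⁻¹) : Matrix (Fin 2) (Fin 2) ℝ).mulVec ![Real.cos θ, Real.sin θ]))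
        = ∫ v : Fin 2 → ℝ, Set.indicator {w : Fin 2 → ℝ | 1 ≤ ‖w‖ ∧ ‖w‖ ≤ Real.exp 1}
            (fun w => f ((↑(g⁻¹) : Matrix (Fin 2) (Fin 2) ℝ).mulVec w)) v := A1.symm
      _ = ∫ v : Fin 2 → ℝ, F ((↑(g⁻¹) : Matrix (Fin 2) (Fin 2) ℝ).mulVec v) := by
          apply integral_congr_ae
          apply Filter.Eventually.of_forall
          intro v
          simp only [hF, Set.indicator_apply, Set.mem_setOf_eq, mulVec_inv_cancel g v]
      _ = ∫ v : Fin 2 → ℝ, F v := integral_comp_mulVec (g⁻¹) F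
      _ = ∫ θ in (-π)..π, f ![Real.cos θ, Real.sin θ] := A2
  have hperL : Function.Periodic
      (fun x => f ((↑(g⁻¹) : Matrix (Fin 2) (Fin 2) ℝ).mulVec ![Real.cos x, Real.sin x]))
      (2 * π) := by
    intro x
    simp [Real.cos_add_two_pi, Real.sin_add_two_pi]
  have hperR : Function.Periodic (fun x => f ![Real.cos x, Real.sin x]) (2 * π) := by
    intro x
    simp [Real.cos_add_two_pi, Real.sin_add_two_pi]
  have hL := hperL.intervalIntegral_add_eq 0 (-π)
  have hR := hperR.intervalIntegral_add_eq 0 (-π)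
  have hx : (0:ℝ) + 2 * π = 2 * π := by ring
  have hy : (-π) + 2 * π = π := by ring
  rw [hx, hy] at hL hR
  rw [hL, hR, key]
end LSL2section
end
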